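/- Let A : [a,b] → M_{n×n}(ℝ) be a continuous matrix function and let σ₁ = {i₁ < ⋯ < iₘ}, σ₂ = {j₁ < ⋯ < jₘ} be disjoint subsets of {1,…,n} of equal cardinality m. Let U = span{eᵢ : i ∈ σ₁ ∪ σ₂} and suppose there exists c > 0 with m_{A(t)|U} ≥ c for all t ∈ [a,b]. For each t ∈ [a,b] let U(t) be the span of the orthonormal vectors u_k(t) = (1 − (t−a)/(b−a))^{1/2} e_{i_k} + ((t−a)/(b−a))^{1/2} e_{j_k}, k = 1,…,m. Then {U(t)}_{t ∈ [a,b]} is a continuous choice of subspaces of ℝⁿ with U(a) = span{eᵢ : i ∈ σ₁}, U(b) = span{eⱼ : j ∈ σ₂}, and m_{A(t)|U(t)} ≥ c for all t ∈ [a,b]. -/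

import Mathlib

/-!
For `s ∈ [0,1]` the vectors `√(1-s) e_{i_k} + √s e_{j_k}` are orthonormal, since the `2m`
coordinates `i_k, j_k` are pairwise distinct. Hence the projection onto their span has entries
`∑ₖ u_k(p) u_k(q)`, which depend continuously on `s`. Every `U(t)` is a nonzero subspace of `U`,
and an infimum over a smaller unit sphere can only be larger.
-/

open scoped RealInnerProductSpace BigOperators

/-- The Euclidean operator norm of a real matrix: `sup {‖Ax‖ : ‖x‖ = 1}`. -/
noncomputable def opNorm {m n : ℕ} (A : Matrix (Fin m) (Fin n) ℝ) : ℝ :=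
  sSup {c : ℝ | ∃ x : EuclideanSpace ℝ (Fin n), ‖x‖ = 1 ∧ c = ‖Matrix.toEuclideanLin A x‖}

/-- The matrix of the orthogonal projection of `ℝⁿ` onto the subspace `U`. -/
noncomputable def projMatrix {n : ℕ} (U : Submodule ℝ (EuclideanSpace ℝ (Fin n))) :
    Matrix (Fin n) (Fin n) ℝ :=
  Matrix.toEuclideanLin.symm (U.subtype ∘ₗ (Submodule.orthogonalProjection U).toLinearMap)

/-- The minimal stretch of a matrix `A` on a subspace `U`: `inf {‖Ax‖ : x ∈ U, ‖x‖ = 1}`. -/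
noncomputable def minStretch {m n : ℕ} (A : Matrix (Fin m) (Fin n) ℝ)
    (U : Submodule ℝ (EuclideanSpace ℝ (Fin n))) : ℝ :=
  sInf {c : ℝ | ∃ x ∈ U, ‖x‖ = 1 ∧ c = ‖Matrix.toEuclideanLin A x‖}

open Submodule

theorem Orthonormal.starProjection_span_range_apply {𝕜 E ι : Type*} [RCLike 𝕜]
    [NormedAddCommGroup E] [InnerProductSpace 𝕜 E] [Fintype ι] {v : ι → E}
    (hv : Orthonormal 𝕜 v) [(span 𝕜 (Set.range v)).HasOrthogonalProjection] (x : E) :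
    (span 𝕜 (Set.range v)).starProjection x = ∑ i, inner 𝕜 (v i) x • v i := by
  refine eq_starProjection_of_mem_of_inner_eq_zero
    (sum_mem fun i _ => smul_mem _ _ (subset_span ⟨i, rfl⟩)) fun w hw => ?_
  induction hw using span_induction with
  | mem _ hw =>
    obtain ⟨j, rfl⟩ := hw
    rw [inner_sub_left, hv.inner_left_fintype, inner_conj_symm, sub_self]
  | zero => exact inner_zero_right _
  | add _ _ _ _ h₁ h₂ => rw [inner_add_right, h₁, h₂, add_zero]
  | smul _ _ _ h => rw [inner_smul_right, h, mul_zero]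

theorem Orthonormal.projMatrix_span_range {n : ℕ} {ι : Type*} [Fintype ι]
    {v : ι → EuclideanSpace ℝ (Fin n)} (hv : Orthonormal ℝ v) :
    projMatrix (span ℝ (Set.range v)) = Matrix.of fun p q => ∑ k, v k p * v k q := by
  ext p q
  have hproj : Matrix.toEuclideanLin (projMatrix (span ℝ (Set.range v))) =
      (span ℝ (Set.range v)).starProjection := by
    rw [projMatrix, LinearEquiv.apply_symm_apply]
    rfl
  calc projMatrix (span ℝ (Set.range v)) p q
      = Matrix.toEuclideanLin (projMatrix (span ℝ (Set.range v)))
          (EuclideanSpace.single q 1) p := by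
        simp [Matrix.toLpLin_apply, Matrix.mulVec_single]
    _ = ∑ k, v k p * v k q := by
        simp [hproj, hv.starProjection_span_range_apply, EuclideanSpace.inner_single_right,
          mul_comm]

theorem continuousOn_projMatrix_span_range {α : Type*} [TopologicalSpace α] {s : Set α}
    {n : ℕ} {ι : Type*} [Fintype ι] {v : α → ι → EuclideanSpace ℝ (Fin n)}
    (hv : ∀ k, Continuous fun t => v t k) (hon : ∀ t ∈ s, Orthonormal ℝ (v t)) :
    ContinuousOn (fun t => projMatrix (span ℝ (Set.range (v t)))) s := by
  refine ContinuousOn.congr (Continuous.continuousOn ?_)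
    fun t ht => (hon t ht).projMatrix_span_range
  refine continuous_matrix fun p q => continuous_finsetSum _ fun k _ => ?_
  exact ((PiLp.continuous_apply 2 _ p).comp (hv k)).mul ((PiLp.continuous_apply 2 _ q).comp (hv k))

theorem minStretch_antitone {m n : ℕ} (A : Matrix (Fin m) (Fin n) ℝ)
    {V W : Submodule ℝ (EuclideanSpace ℝ (Fin n))} (hVW : V ≤ W) (hV : V ≠ ⊥) :
    minStretch A W ≤ minStretch A V := by
  obtain ⟨x, hxV, hx⟩ := V.ne_bot_iff.mp hV
  refine le_csInf ⟨_, ‖x‖⁻¹ • x, V.smul_mem _ hxV, norm_smul_inv_norm hx, rfl⟩ ?_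
  rintro _ ⟨y, hyV, hy, rfl⟩
  refine csInf_le ⟨0, ?_⟩ ⟨y, hVW hyV, hy, rfl⟩
  rintro _ ⟨z, -, -, rfl⟩
  exact norm_nonneg _

noncomputable def switchFrame {ι : Type*} {n : ℕ} (σi σj : ι → Fin n) (s : ℝ) :
    ι → EuclideanSpace ℝ (Fin n) :=
  fun k => √(1 - s) • EuclideanSpace.single (σi k) 1 + √s • EuclideanSpace.single (σj k) 1

section switchFrame

variable {ι : Type*} {n : ℕ} {σi σj : ι → Fin n}

theorem switchFrame_zero : switchFrame σi σj 0 = fun k => EuclideanSpace.single (σi k) 1 := by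
  funext k
  simp [switchFrame]

theorem switchFrame_one : switchFrame σi σj 1 = fun k => EuclideanSpace.single (σj k) 1 := by
  funext k
  simp [switchFrame]

theorem continuous_switchFrame (k : ι) : Continuous fun s => switchFrame σi σj s k := by
  unfold switchFrame
  fun_prop

theorem span_switchFrame_le (s : ℝ) :
    span ℝ (Set.range (switchFrame σi σj s)) ≤
      span ℝ ((fun p => EuclideanSpace.single p (1 : ℝ)) '' (Set.range σi ∪ Set.range σj)) := by
  refine span_le.mpr ?_
  rintro _ ⟨k, rfl⟩
  exact add_mem (smul_mem _ _ (subset_span ⟨σi k, Or.inl ⟨k, rfl⟩, rfl⟩))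
    (smul_mem _ _ (subset_span ⟨σj k, Or.inr ⟨k, rfl⟩, rfl⟩))

theorem orthonormal_switchFrame (hi : Function.Injective σi) (hj : Function.Injective σj)
    (hdisj : Disjoint (Set.range σi) (Set.range σj)) {s : ℝ} (hs₀ : 0 ≤ s) (hs₁ : s ≤ 1) :
    Orthonormal ℝ (switchFrame σi σj s) := by
  classical
  have hij : ∀ k l, σi k ≠ σj l := fun k l h =>
    Set.disjoint_left.mp hdisj ⟨k, rfl⟩ ⟨l, h.symm⟩
  rw [orthonormal_iff_ite]
  intro k l
  simp only [switchFrame, inner_add_left, inner_add_right, real_inner_smul_left,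
    real_inner_smul_right, EuclideanSpace.inner_single_left, PiLp.single_apply, hi.eq_iff,
    hj.eq_iff, hij, (hij _ _).symm, map_one, one_mul, if_false, mul_zero,
    add_zero, zero_add]
  split_ifs
  · rw [mul_one, mul_one, Real.mul_self_sqrt hs₀, Real.mul_self_sqrt (sub_nonneg.mpr hs₁)]
    ring
  · simp

end switchFrame

theorem column_switch_general {n m : ℕ} (a b : ℝ) (hab : a < b)
    (A : ℝ → Matrix (Fin n) (Fin n) ℝ)
    (σi σj : Fin m → Fin n) (hi : StrictMono σi) (hj : StrictMono σj)
    (hdisj : Disjoint (Set.range σi) (Set.range σj))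
    (c : ℝ)
    (hstretch : ∀ t ∈ Set.Icc a b,
      c ≤ minStretch (A t)
        (Submodule.span ℝ
          ((fun k => EuclideanSpace.single k (1:ℝ)) '' (Set.range σi ∪ Set.range σj))))
    (u : ℝ → Fin m → EuclideanSpace ℝ (Fin n))
    (hu : ∀ (t : ℝ) (k : Fin m), u t k =
      Real.sqrt (1 - (t - a) / (b - a)) • EuclideanSpace.single (σi k) (1:ℝ) +
      Real.sqrt ((t - a) / (b - a)) • EuclideanSpace.single (σj k) (1:ℝ))
    (U : ℝ → Submodule ℝ (EuclideanSpace ℝ (Fin n)))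
    (hU : ∀ t : ℝ, U t = Submodule.span ℝ (Set.range (u t))) :
    (∀ t ∈ Set.Icc a b, Orthonormal ℝ (u t)) ∧
    ContinuousOn (fun t => projMatrix (U t)) (Set.Icc a b) ∧
    U a = Submodule.span ℝ (Set.range fun k => EuclideanSpace.single (σi k) (1:ℝ)) ∧
    U b = Submodule.span ℝ (Set.range fun k => EuclideanSpace.single (σj k) (1:ℝ)) ∧
    ∀ t ∈ Set.Icc a b, c ≤ minStretch (A t) (U t) := by
  have hba : 0 < b - a := sub_pos.mpr hab
  obtain rfl : u = fun t => switchFrame σi σj ((t - a) / (b - a)) := funext fun t => funext (hu t)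
  obtain rfl : U = fun t => span ℝ (Set.range (switchFrame σi σj ((t - a) / (b - a)))) :=
    funext hU
  have hon : ∀ t ∈ Set.Icc a b, Orthonormal ℝ (switchFrame σi σj ((t - a) / (b - a))) :=
    fun t ht => orthonormal_switchFrame hi.injective hj.injective hdisj
      (div_nonneg (sub_nonneg.mpr ht.1) hba.le) ((div_le_one hba).mpr (by linarith [ht.2]))
  refine ⟨hon, continuousOn_projMatrix_span_range
    (fun k => (continuous_switchFrame k).comp (by fun_prop)) hon, by simp [switchFrame_zero],
    by simp [div_self hba.ne', switchFrame_one], fun t ht => ?_⟩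
  rcases isEmpty_or_nonempty (Fin m) with _ | ⟨⟨k⟩⟩
  · -- for `m = 0` both subspaces are `⊥`
    simpa [Set.range_eq_empty] using hstretch t ht
  · refine (hstretch t ht).trans (minStretch_antitone _ (span_switchFrame_le _) ?_)
    exact (Submodule.ne_bot_iff _).mpr ⟨_, subset_span ⟨k, rfl⟩, (hon t ht).ne_zero k⟩

/-- **Column switch lemma.** Let `A : [a,b] → M_{n×n}(ℝ)` be continuous, let
`σ₁ = {i₁ < ⋯ < iₘ}` and `σ₂ = {j₁ < ⋯ < jₘ}` be disjoint subsets of `{1,…,n}`, and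
suppose the minimal stretch of `A(t)` on `U = span{eᵢ : i ∈ σ₁ ∪ σ₂}` is at least `c > 0`
on `[a,b]`. Then the quadratic convex combination subspaces
`U(t) = span{u_k(t)}` with `u_k(t) = (1−(t−a)/(b−a))^{1/2}e_{i_k} + ((t−a)/(b−a))^{1/2}e_{j_k}`
form a continuous choice of subspaces with `U(a) = span σ₁`, `U(b) = span σ₂`, and
minimal stretch at least `c` throughout. -/
theorem column_switch {n m : ℕ} (a b : ℝ) (hab : a < b)
    (A : ℝ → Matrix (Fin n) (Fin n) ℝ) (hA : ContinuousOn A (Set.Icc a b))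
    (σi σj : Fin m → Fin n) (hi : StrictMono σi) (hj : StrictMono σj)
    (hdisj : Disjoint (Set.range σi) (Set.range σj))
    (c : ℝ) (hc : 0 < c)
    (hstretch : ∀ t ∈ Set.Icc a b,
      c ≤ minStretch (A t)
        (Submodule.span ℝ
          ((fun k => EuclideanSpace.single k (1:ℝ)) '' (Set.range σi ∪ Set.range σj))))
    (u : ℝ → Fin m → EuclideanSpace ℝ (Fin n))
    (hu : ∀ (t : ℝ) (k : Fin m), u t k =
      Real.sqrt (1 - (t - a) / (b - a)) • EuclideanSpace.single (σi k) (1:ℝ) +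
      Real.sqrt ((t - a) / (b - a)) • EuclideanSpace.single (σj k) (1:ℝ))
    (U : ℝ → Submodule ℝ (EuclideanSpace ℝ (Fin n)))
    (hU : ∀ t : ℝ, U t = Submodule.span ℝ (Set.range (u t))) :
    (∀ t ∈ Set.Icc a b, Orthonormal ℝ (u t)) ∧
    ContinuousOn (fun t => projMatrix (U t)) (Set.Icc a b) ∧
    U a = Submodule.span ℝ (Set.range fun k => EuclideanSpace.single (σi k) (1:ℝ)) ∧
    U b = Submodule.span ℝ (Set.range fun k => EuclideanSpace.single (σj k) (1:ℝ)) ∧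
    ∀ t ∈ Set.Icc a b, c ≤ minStretch (A t) (U t) :=
  column_switch_general a b hab A σi σj hi hj hdisj c hstretch u hu U hU
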